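/- Let R be a Prüfer domain, J a weakly prime ideal of R, K a nonzero finitely generated ideal of R, and J_K := {a ∈ R : (aR : K) ⊆ J}. Then for every prime ideal p of R with J^# ⊆ p one has J_K = (J·K)·R_p ∩ R. Consequently J_K is a weakly prime ideal of R and (J_K)^# = J^#. -/

import Mathlib

/-- An arithmetical ring: localizations at maximal ideals have totally ordered ideal lattices.
A Prüfer domain is an integral domain satisfying this condition. -/
def IsArithmetical (R : Type*) [CommRing R] : Prop :=
  ∀ (m : Ideal R) [m.IsMaximal],
    ∀ I J : Ideal (Localization.AtPrime m), I ≤ J ∨ J ≤ I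

/-- A weakly prime ideal: a proper ideal such that for all finitely generated ideals `A, B`,
`A ⊓ B ≤ I` implies `A ≤ I` or `B ≤ I`. -/
def IsWeaklyPrime {R : Type*} [CommRing R] (I : Ideal R) : Prop :=
  I ≠ ⊤ ∧ ∀ A B : Ideal R, A.FG → B.FG → A ⊓ B ≤ I → A ≤ I ∨ B ≤ I

/-- `I·R_p ∩ R`: the preimage under the localization map `R → R_p` of the ideal of `R_p`
generated by the image of `I`. -/
def locContract {R : Type*} [CommRing R] (I p : Ideal R) (hp : p.IsPrime) : Ideal R :=
  haveI := hp
  (I.map (algebraMap R (Localization.AtPrime p))).comap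
    (algebraMap R (Localization.AtPrime p))

/-!
In a Prüfer domain the ideals of each localization `R_p` are totally ordered, so a finitely
generated ideal `K` becomes principal in `R_p`, generated by some `k ∈ K`, and `J` is
`p`-saturated as soon as `J^# ⊆ p`. Locally the colon `(aR : K)` is then `(a : k)` in a valuation
ring, which gives `J_K = (J·k)R_p ∩ R = (J·K)R_p ∩ R`. For `p = J^#` this exhibits `J_K` as a
`p`-saturated ideal, hence weakly prime by the total order of ideals in `R_p`, and comparing zero
divisors modulo `J` and modulo `J_K` through `k` gives `(J_K)^# = J^#`.

All localizations are handled inside `R`: `x ∈ I·R_p ∩ R` means `s * x ∈ I` for some `s ∉ p`.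
-/

section Development

open Ideal

variable {R : Type*} [CommRing R]

def Ideal.sharp (I : Ideal R) : Set R := {a | ∃ r ∉ I, a * r ∈ I}

section Saturation

variable {p : Ideal R} [hp : p.IsPrime]

theorem mem_locContract_iff {I : Ideal R} {x : R} :
    x ∈ locContract I p hp ↔ ∃ s ∉ p, s * x ∈ I :=
  IsLocalization.algebraMap_mem_map_algebraMap_iff (S := Localization.AtPrime p) p.primeCompl I x

theorem le_locContract (I : Ideal R) : I ≤ locContract I p hp :=
  fun x hx => mem_locContract_iff.2 ⟨1, p.primeCompl.one_mem, by rwa [one_mul]⟩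

theorem locContract_locContract_le (I : Ideal R) :
    locContract (locContract I p hp) p hp ≤ locContract I p hp := by
  intro x hx
  obtain ⟨s, hs, hsx⟩ := mem_locContract_iff.1 hx
  obtain ⟨t, ht, htsx⟩ := mem_locContract_iff.1 hsx
  exact mem_locContract_iff.2 ⟨t * s, hp.mul_notMem ht hs, by rwa [mul_assoc]⟩

theorem le_locContract_of_map_le {m A B : Ideal R} [m.IsPrime] (hpm : p ≤ m)
    (h : A.map (algebraMap R (Localization.AtPrime m)) ≤
      B.map (algebraMap R (Localization.AtPrime m))) :
    A ≤ locContract B p hp := by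
  intro x hx
  obtain ⟨s, hs, hsx⟩ := (IsLocalization.algebraMap_mem_map_algebraMap_iff
    (S := Localization.AtPrime m) m.primeCompl B x).1 (h (mem_map_of_mem _ hx))
  exact mem_locContract_iff.2 ⟨s, fun hsp => hs (hpm hsp), hsx⟩

theorem locContract_le_of_sharp_subset {J : Ideal R} (hJp : J.sharp ⊆ p) :
    locContract J p hp ≤ J := by
  intro x hx
  obtain ⟨s, hs, hsx⟩ := mem_locContract_iff.1 hx
  by_contra hxJ
  exact hs (hJp ⟨x, hxJ, hsx⟩)

end Saturation

theorem le_of_sharp_subset {J p : Ideal R} (hJ : J ≠ ⊤) (hJp : J.sharp ⊆ p) : J ≤ p :=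
  fun _ ha => hJp ⟨1, (ne_top_iff_one J).1 hJ, by rwa [mul_one]⟩

theorem IsWeaklyPrime.exists_notMem_dvd_dvd {J : Ideal R} (hJ : IsWeaklyPrime J) {r s : R}
    (hr : r ∉ J) (hs : s ∉ J) : ∃ t ∉ J, r ∣ t ∧ s ∣ t := by
  have hrs : ¬span {r} ⊓ span {s} ≤ J := by
    intro h
    rcases hJ.2 _ _ (Submodule.fg_span_singleton r)
      (Submodule.fg_span_singleton s) h with h' | h'
    exacts [hr (h' (mem_span_singleton_self r)), hs (h' (mem_span_singleton_self s))]
  obtain ⟨t, ⟨hrt, hst⟩, htJ⟩ := SetLike.not_le_iff_exists.1 hrs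
  exact ⟨t, htJ, mem_span_singleton.1 hrt, mem_span_singleton.1 hst⟩

def IsWeaklyPrime.sharpIdeal {J : Ideal R} (hJ : IsWeaklyPrime J) : Ideal R where
  carrier := J.sharp
  add_mem' := by
    rintro a b ⟨r, hr, har⟩ ⟨s, hs, hbs⟩
    obtain ⟨t, ht, hrt, hst⟩ := hJ.exists_notMem_dvd_dvd hr hs
    refine ⟨t, ht, ?_⟩
    rw [add_mul]
    exact J.add_mem (J.mem_of_dvd (mul_dvd_mul_left a hrt) har)
      (J.mem_of_dvd (mul_dvd_mul_left b hst) hbs)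
  zero_mem' := ⟨1, (ne_top_iff_one J).1 hJ.1, by rw [zero_mul]; exact J.zero_mem⟩
  smul_mem' := by
    rintro c a ⟨r, hr, har⟩
    exact ⟨r, hr, by rw [smul_eq_mul, mul_assoc]; exact J.mul_mem_left c har⟩

theorem IsWeaklyPrime.isPrime_sharpIdeal {J : Ideal R} (hJ : IsWeaklyPrime J) :
    hJ.sharpIdeal.IsPrime where
  ne_top' := by
    rw [ne_top_iff_one]
    rintro ⟨r, hr, h1r⟩
    exact hr (by rwa [one_mul] at h1r)
  mem_or_mem' := by
    rintro x y ⟨r, hr, hxyr⟩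
    by_cases hyr : y * r ∈ J
    · exact Or.inr ⟨r, hr, hyr⟩
    · exact Or.inl ⟨y * r, hyr, by rwa [← mul_assoc]⟩

theorem exists_mul_mem_span_singleton_sup {p A B : Ideal R} [hp : p.IsPrime] {a b Sa Sb : R}
    (hSa : Sa ∉ p) (hA : ∀ c ∈ A, Sa * c ∈ span {a}) (hSb : Sb ∉ p)
    (hB : ∀ c ∈ B, Sb * c ∈ span {b}) (hab : span {a} ≤ locContract (span {b}) p hp) :
    ∃ S ∉ p, ∀ c ∈ A ⊔ B, S * c ∈ span {b} := by
  obtain ⟨u, hu, hua⟩ := mem_locContract_iff.1 (hab (mem_span_singleton_self a))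
  refine ⟨u * Sa * Sb, hp.mul_notMem (hp.mul_notMem hu hSa) hSb, fun c hc => ?_⟩
  obtain ⟨x, hx, y, hy, rfl⟩ := Submodule.mem_sup.1 hc
  obtain ⟨z, hz⟩ := mem_span_singleton'.1 (hA x hx)
  have hSx : u * Sa * Sb * x = Sb * z * (u * a) := by linear_combination -Sb * u * hz
  have hSy : u * Sa * Sb * y = u * Sa * (Sb * y) := by ring
  rw [mul_add, hSx, hSy]
  exact add_mem (mul_mem_left _ _ hua) (mul_mem_left _ _ (hB y hy))

section LocalGenerator

variable {K : Ideal R} {k S : R}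

theorem mul_mem_colon_of_mul_mem (hS : ∀ c ∈ K, S * c ∈ span {k}) {a b : R}
    (h : b * k ∈ span {a}) : S * b ∈ (span {a}).colon K := by
  refine Submodule.mem_colon.2 fun c hc => ?_
  obtain ⟨y, hy⟩ := mem_span_singleton'.1 (hS c hc)
  rw [smul_eq_mul, show S * b * c = y * (b * k) by linear_combination -b * hy]
  exact mul_mem_left _ y h

theorem mul_mem_mul_span_singleton (hS : ∀ c ∈ K, S * c ∈ span {k}) {J : Ideal R} {x : R}
    (hx : x ∈ J * K) : S * x ∈ J * span {k} := by
  have hle : span {S} * (J * K) ≤ J * span {k} :=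
    calc span {S} * (J * K) = J * (span {S} * K) := mul_left_comm _ _ _
      _ ≤ J * span {k} := mul_mono_right (span_singleton_mul_le_iff.2 hS)
  exact hle (mul_mem_mul (mem_span_singleton_self S) hx)

end LocalGenerator

theorem sharp_subset_sharp_of_forall_mem_iff {I J K : Ideal R}
    (hI : ∀ a, a ∈ I ↔ (span {a}).colon K ≤ J) : I.sharp ⊆ J.sharp := by
  rintro a ⟨r, hr, har⟩
  obtain ⟨c, hc, hcJ⟩ := SetLike.not_le_iff_exists.1 ((hI r).not.1 hr)
  refine ⟨c, hcJ, (hI _).1 har (Submodule.mem_colon.2 fun d hd => ?_)⟩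
  obtain ⟨w, hw⟩ := mem_span_singleton'.1 (Submodule.mem_colon.1 hc d hd)
  rw [smul_eq_mul] at hw ⊢
  exact mem_span_singleton'.2 ⟨w, by linear_combination a * hw⟩

theorem sharp_subset_sharp_of_local_generator {I J K : Ideal R}
    (hI : ∀ a, a ∈ I ↔ (span {a}).colon K ≤ J) (hJKI : J * K ≤ I) {k S : R} (hk : k ∈ K)
    (hS : ∀ c ∈ K, S * c ∈ span {k}) (hSJ : S ∉ J.sharp) : J.sharp ⊆ I.sharp := by
  rintro a ⟨t, ht, hat⟩
  refine ⟨t * k, fun htk => hSJ ⟨t, ht, ?_⟩, hJKI ?_⟩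
  · exact (hI _).1 htk (mul_mem_colon_of_mul_mem hS (mem_span_singleton_self _))
  · rw [← mul_assoc]
    exact mul_mem_mul hat hk

namespace IsArithmetical

theorem le_locContract_total (hR : IsArithmetical R) (p : Ideal R) [hp : p.IsPrime]
    (A B : Ideal R) :
    A ≤ locContract B p hp ∨ B ≤ locContract A p hp := by
  obtain ⟨m, hm, hpm⟩ := p.exists_le_maximal hp.ne_top
  exact (hR m _ _).imp (le_locContract_of_map_le hpm) (le_locContract_of_map_le hpm)

theorem isWeaklyPrime_of_locContract_le (hR : IsArithmetical R) {p I : Ideal R} [hp : p.IsPrime]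
    (hI : I ≠ ⊤) (hsat : locContract I p hp ≤ I) : IsWeaklyPrime I := by
  have key : ∀ A B : Ideal R, B ≤ locContract A p hp → A ⊓ B ≤ I → B ≤ I := by
    intro A B hBA hAB x hx
    obtain ⟨s, hs, hsx⟩ := mem_locContract_iff.1 (hBA hx)
    exact hsat (mem_locContract_iff.2 ⟨s, hs, hAB ⟨hsx, B.mul_mem_left s hx⟩⟩)
  refine ⟨hI, fun A B _ _ hAB => ?_⟩
  rcases hR.le_locContract_total p A B with h | h
  · exact Or.inl (key B A h (inf_comm A B ▸ hAB))
  · exact Or.inr (key A B h hAB)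

theorem exists_mul_mem_span_singleton (hR : IsArithmetical R) (p : Ideal R) [hp : p.IsPrime]
    {K : Ideal R} (hK : K.FG) : ∃ k ∈ K, ∃ S ∉ p, ∀ c ∈ K, S * c ∈ span {k} := by
  induction K, hK using Submodule.fg_induction with
  | singleton x =>
    exact ⟨x, mem_span_singleton_self x, 1, p.primeCompl.one_mem, fun c hc => by rwa [one_mul]⟩
  | sup A B _ _ hA hB =>
    obtain ⟨a, haA, Sa, hSa, hA⟩ := hA
    obtain ⟨b, hbB, Sb, hSb, hB⟩ := hB
    rcases hR.le_locContract_total p (span {a}) (span {b}) with hab | hba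
    · obtain ⟨S, hS, hSAB⟩ := exists_mul_mem_span_singleton_sup hSa hA hSb hB hab
      exact ⟨b, Submodule.mem_sup_right hbB, S, hS, hSAB⟩
    · obtain ⟨S, hS, hSBA⟩ := exists_mul_mem_span_singleton_sup hSb hB hSa hA hba
      exact ⟨a, Submodule.mem_sup_left haA, S, hS, sup_comm A B ▸ hSBA⟩

theorem colon_le_iff_mem_locContract [IsDomain R] (hR : IsArithmetical R)
    {J K p : Ideal R} [hp : p.IsPrime] (hJ : J ≠ ⊤) (hKfg : K.FG) (hK : K ≠ ⊥)
    (hJp : J.sharp ⊆ p) (a : R) :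
    (span {a}).colon K ≤ J ↔ a ∈ locContract (J * K) p hp := by
  obtain ⟨k, hkK, S, hS, hSK⟩ := hR.exists_mul_mem_span_singleton p hKfg
  have hk : k ≠ 0 := by
    rintro rfl
    refine hK (eq_bot_iff.2 fun c hc => ?_)
    have hSc : S * c = 0 := by simpa using hSK c hc
    exact (mul_eq_zero.1 hSc).resolve_left fun h0 => hS (h0 ▸ p.zero_mem)
  rw [mem_locContract_iff]
  constructor
  · intro hcolon
    rcases hR.le_locContract_total p (span {a}) (span {k}) with hak | hka
    -- Locally `k ∣ a`, and the quotient `a / k` is, up to the unit `S`, an element of `(aR : K)`.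
    · obtain ⟨u, hu, hua⟩ := mem_locContract_iff.1 (hak (mem_span_singleton_self a))
      obtain ⟨x, hx⟩ := mem_span_singleton'.1 hua
      have hSx : S * x ∈ J :=
        hcolon (mul_mem_colon_of_mul_mem hSK (hx ▸ mul_mem_left _ u (mem_span_singleton_self a)))
      refine ⟨S * u, hp.mul_notMem hS hu, ?_⟩
      rw [show S * u * a = S * x * k by linear_combination -S * hx]
      exact mul_mem_mul hSx hkK
    -- Locally `a ∣ k`: then `(aR : K)` contains an element outside `p ⊇ J`.
    · obtain ⟨u, hu, huk⟩ := mem_locContract_iff.1 (hka (mem_span_singleton_self k))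
      exact absurd (le_of_sharp_subset hJ hJp (hcolon (mul_mem_colon_of_mul_mem hSK huk)))
        (hp.mul_notMem hS hu)
  · rintro ⟨s, hs, hsa⟩ b hb
    obtain ⟨y, hy⟩ := mem_span_singleton'.1 (Submodule.mem_colon.1 hb k hkK)
    obtain ⟨j, hj, hjk⟩ :=
      mem_mul_span_singleton.1 (mul_mem_mul_span_singleton hSK (mul_mem_left _ y hsa))
    rw [smul_eq_mul] at hy
    have hjb : S * s * b = j := mul_right_cancel₀ hk (by linear_combination -hjk - S * s * hy)
    exact locContract_le_of_sharp_subset hJp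
      (mem_locContract_iff.2 ⟨S * s, hp.mul_notMem hS hs, hjb ▸ hj⟩)

end IsArithmetical

end Development

/-- Let `R` be a Prüfer domain, `J` a weakly prime ideal, `K` a nonzero finitely generated
ideal and `J_K := {a | (aR : K) ⊆ J}`.  Then for every prime `p ⊇ J^#` we have
`J_K = (J·K)·R_p ∩ R`; consequently `J_K` is a weakly prime ideal and `(J_K)^# = J^#`. -/
theorem stmt4 {R : Type*} [CommRing R] [IsDomain R] (hR : IsArithmetical R)
    (J : Ideal R) (hJ : IsWeaklyPrime J)
    (K : Ideal R) (hKfg : K.FG) (hK : K ≠ ⊥) :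
    (∀ (p : Ideal R) (hp : p.IsPrime), {a : R | ∃ r ∉ J, a * r ∈ J} ⊆ ↑p →
      {a : R | (Ideal.span {a}).colon K ≤ J} = ↑(locContract (J * K) p hp)) ∧
    (∃ JK : Ideal R, (JK : Set R) = {a : R | (Ideal.span {a}).colon K ≤ J} ∧
      IsWeaklyPrime JK ∧
      {a : R | ∃ r ∉ JK, a * r ∈ JK} = {a : R | ∃ r ∉ J, a * r ∈ J}) := by
  have hloc (p : Ideal R) (hp : p.IsPrime) (hJp : J.sharp ⊆ p) (a : R) :
      (Ideal.span {a}).colon K ≤ J ↔ a ∈ locContract (J * K) p hp :=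
    hR.colon_le_iff_mem_locContract hJ.1 hKfg hK hJp a
  refine ⟨fun p hp hJp => Set.ext (hloc p hp hJp), ?_⟩
  have hq := hJ.isPrime_sharpIdeal
  set JK := locContract (J * K) hJ.sharpIdeal hq
  have hJK (a : R) : a ∈ JK ↔ (Ideal.span {a}).colon K ≤ J := (hloc _ hq subset_rfl a).symm
  have hJK_ne_top : JK ≠ ⊤ := by
    refine (Ideal.ne_top_iff_one _).2 fun h1 => (Ideal.ne_top_iff_one J).1 hJ.1 ((hJK 1).1 h1 ?_)
    rw [Ideal.span_singleton_one]
    exact Submodule.mem_colon.2 fun _ _ => Submodule.mem_top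
  obtain ⟨k, hkK, S, hS, hSK⟩ := hR.exists_mul_mem_span_singleton hJ.sharpIdeal hKfg
  exact ⟨JK, Set.ext hJK, hR.isWeaklyPrime_of_locContract_le hJK_ne_top
      (locContract_locContract_le _),
    (sharp_subset_sharp_of_forall_mem_iff hJK).antisymm
      (sharp_subset_sharp_of_local_generator hJK (le_locContract _) hkK hSK hS)⟩
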